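/- arXiv:2206.06046 — 4 statements merged into one kernel-verified Lean document; each statement's English description precedes it below -/
import Mathlib

section
/- For every LFD formula ψ, standard first-order model M (over the signature extended with an n-ary relation symbol A), and assignment s with M,s ⊨ A(v₁,...,vₙ), we have: the dependence model T(M) obtained by extracting the team encoded by A satisfies ψ at s if and only if M,s ⊨ tr(ψ) ∧ A(v₁,...,vₙ), where tr is the compositional first-order translation of LFD. -/
namespace LFDPaper

/-- A relational structure over signature `Rel` with arities `ar`. -/
structure Str (Rel : Type) (ar : Rel → ℕ) (α : Type) where
  interp : ∀ R : Rel, (Fin (ar R) → α) → Prop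

/-- Syntax of LFD over relational signature `(Rel, ar)` and variables `Var`. -/
inductive LFD (Rel : Type) (ar : Rel → ℕ) (Var : Type) where
  | atom : (R : Rel) → (Fin (ar R) → Var) → LFD Rel ar Var
  | dep  : Finset Var → Var → LFD Rel ar Var
  | and  : LFD Rel ar Var → LFD Rel ar Var → LFD Rel ar Var
  | neg  : LFD Rel ar Var → LFD Rel ar Var
  | ex   : Finset Var → LFD Rel ar Var → LFD Rel ar Var

variable {Rel Var α β X : Type} {ar : Rel → ℕ}

/-- LFD semantics over a dependence model `(M, A)`. -/
def LFD.sat (M : Str Rel ar α) (A : Set (Var → α)) : (Var → α) → LFD Rel ar Var → Prop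
  | s, .atom R vs => M.interp R (fun i => s (vs i))
  | s, .dep V u => ∀ t ∈ A, (∀ v ∈ V, s v = t v) → s u = t u
  | s, .and φ ψ => LFD.sat M A s φ ∧ LFD.sat M A s ψ
  | s, .neg φ => ¬ LFD.sat M A s φ
  | s, .ex V φ => ∃ t ∈ A, (∀ v ∈ V, s v = t v) ∧ LFD.sat M A t φ

/-- Free variables of an LFD formula. -/
def LFD.free [DecidableEq Var] : LFD Rel ar Var → Finset Var
  | .atom _ vs => Finset.image vs Finset.univ
  | .dep V _ => V
  | .and φ ψ => φ.free ∪ ψ.free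
  | .neg φ => φ.free
  | .ex V _ => V

/-- First-order syntax with named variables `X`, with polyadic quantification `exs`. -/
inductive FO (Rel : Type) (ar : Rel → ℕ) (X : Type) where
  | atom : (R : Rel) → (Fin (ar R) → X) → FO Rel ar X
  | eq : X → X → FO Rel ar X
  | tru : FO Rel ar X
  | and : FO Rel ar X → FO Rel ar X → FO Rel ar X
  | neg : FO Rel ar X → FO Rel ar X
  | exs : Finset X → FO Rel ar X → FO Rel ar X

/-- Tarskian satisfaction for `FO` (total assignments `X → α`). -/
def FO.sat (M : Str Rel ar α) : (X → α) → FO Rel ar X → Prop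
  | s, .atom R vs => M.interp R (fun i => s (vs i))
  | s, .eq x y => s x = s y
  | _, .tru => True
  | s, .and φ ψ => FO.sat M s φ ∧ FO.sat M s ψ
  | s, .neg φ => ¬ FO.sat M s φ
  | s, .exs Z φ => ∃ t : X → α, (∀ x ∉ Z, t x = s x) ∧ FO.sat M t φ

def FO.imp (φ ψ : FO Rel ar X) : FO Rel ar X := .neg (.and φ (.neg ψ))
def FO.fall (Z : Finset X) (φ : FO Rel ar X) : FO Rel ar X := .neg (.exs Z (.neg φ))
def FO.bigAnd (l : List (FO Rel ar X)) : FO Rel ar X := l.foldr FO.and .tru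

def FO.free [DecidableEq X] : FO Rel ar X → Finset X
  | .atom _ vs => Finset.image vs Finset.univ
  | .eq x y => {x, y}
  | .tru => ∅
  | .and φ ψ => φ.free ∪ ψ.free
  | .neg φ => φ.free
  | .exs Z φ => φ.free \ Z

/-- The (equality-free) guarded fragment: all quantification is of the form
`∃ȳ (G(x̄,ȳ) ∧ ψ)` with `G` an atom whose variables cover all free variables of the body. -/
inductive IsGF [DecidableEq X] : FO Rel ar X → Prop
  | atom (R : Rel) (vs : Fin (ar R) → X) : IsGF (.atom R vs)
  | and {φ ψ : FO Rel ar X} : IsGF φ → IsGF ψ → IsGF (.and φ ψ)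
  | neg {φ : FO Rel ar X} : IsGF φ → IsGF (.neg φ)
  | exg {Z : Finset X} {G : Rel} {vs : Fin (ar G) → X} {φ : FO Rel ar X} :
      IsGF φ →
      FO.free (.and (.atom G vs) φ) ⊆ Finset.image vs Finset.univ →
      IsGF (.exs Z (.and (.atom G vs) φ))

/-! ### Dependence bisimulations and distinguished models -/

/-- The set of variables on which two assignments agree. -/
def eqSet (s t : Var → α) : Set Var := {v | s v = t v}

/-- `V` is dependence-closed at `s` (w.r.t. team `A`). -/
def depClosedAt (A : Set (Var → α)) (s : Var → α) (V : Set Var) : Prop :=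
  {u | ∀ t ∈ A, (∀ v ∈ V, s v = t v) → s u = t u} = V

/-- Semantic dependence-closure operator. -/
def DclSem (A : Set (Var → α)) (s : Var → α) (V : Set Var) : Set Var :=
  {u | ∀ t ∈ A, (∀ v ∈ V, s v = t v) → s u = t u}

/-- Dependence bisimulation between dependence models. -/
def DepBisim (M : Str Rel ar α) (A : Set (Var → α)) (M' : Str Rel ar β) (A' : Set (Var → β))
    (Z : Set ((Var → α) × (Var → β))) : Prop :=
  (∀ p ∈ Z, p.1 ∈ A ∧ p.2 ∈ A') ∧
  ∀ p ∈ Z,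
    (∀ (R : Rel) (vs : Fin (ar R) → Var),
        M.interp R (fun i => p.1 (vs i)) ↔ M'.interp R (fun i => p.2 (vs i))) ∧
    (∀ t ∈ A, ∃ t' ∈ A', eqSet p.1 t ⊆ eqSet p.2 t' ∧ (t, t') ∈ Z ∧
        depClosedAt A' p.2 (eqSet p.1 t)) ∧
    (∀ t' ∈ A', ∃ t ∈ A, eqSet p.2 t' ⊆ eqSet p.1 t ∧ (t, t') ∈ Z ∧
        depClosedAt A p.1 (eqSet p.2 t'))

/-- A team is distinguished if every domain value can be assigned to at most one variable. -/
def Distinguished (A : Set (Var → α)) : Prop :=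
  ∀ s ∈ A, ∀ t ∈ A, ∀ v w, s v = t w → v = w

/-- The distinguished companion of an assignment. -/
def sd (s : Var → α) : Var → Var × α := fun v => (v, s v)

/-- The distinguished companion team. -/
def Ad (A : Set (Var → α)) : Set (Var → Var × α) := sd '' A

/-- The distinguished companion structure. -/
def Md (M : Str Rel ar α) (A : Set (Var → α)) : Str Rel ar (Var × α) :=
  ⟨fun R t => ∃ s ∈ A, ∃ us : Fin (ar R) → Var,
      (∀ i, t i = (us i, s (us i))) ∧ M.interp R (fun i => s (us i))⟩

/-! ### The transformation G, guarded sets and guarded bisimulations -/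

/-- `G` keeps the same domain and restricts relations to tuples covered by a single
admissible assignment. -/
def Gmap (M : Str Rel ar α) (A : Set (Var → α)) : Str Rel ar α :=
  ⟨fun R t => M.interp R t ∧ ∃ s ∈ A, ∀ i, ∃ v, t i = s v⟩

def GuardedSet (M : Str Rel ar α) (B : Set α) : Prop :=
  ∃ (R : Rel) (t : Fin (ar R) → α), M.interp R t ∧ B ⊆ Set.range t

def GuardedAssign (M : Str Rel ar α) (s : X → α) : Prop :=
  ∃ (R : Rel) (t : Fin (ar R) → α), M.interp R t ∧ ∀ x, ∃ i, s x = t i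

/-- Guarded bisimulation (equality-free version): a nonempty family of partial maps
(with guarded domains) preserving atoms both ways, with back-and-forth conditions
along guarded sets. -/
def GBisim (M : Str Rel ar α) (N : Str Rel ar β) (F : Set (Set α × (α → β))) : Prop :=
  F.Nonempty ∧ ∀ p ∈ F,
    GuardedSet M p.1 ∧
    (∀ (R : Rel) (t : Fin (ar R) → α), (∀ i, t i ∈ p.1) →
        (M.interp R t ↔ N.interp R (fun i => p.2 (t i)))) ∧
    (∀ B : Set α, GuardedSet M B → ∃ q ∈ F, q.1 = B ∧ ∀ a ∈ p.1 ∩ B, q.2 a = p.2 a) ∧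
    (∀ C : Set β, GuardedSet N C → ∃ q ∈ F, q.2 '' q.1 = C ∧ ∀ a ∈ p.1 ∩ q.1, q.2 a = p.2 a)

/-! ### The translation τ from GF to LFD -/

def ltop [Inhabited Var] : LFD Rel ar Var := .dep {default} default
def lbot [Inhabited Var] : LFD Rel ar Var := .neg ltop
def lor (φ ψ : LFD Rel ar Var) : LFD Rel ar Var := .neg (.and (.neg φ) (.neg ψ))
def lbigOr [Inhabited Var] (l : List (LFD Rel ar Var)) : LFD Rel ar Var := l.foldr lor lbot

/-- Compositional translation from (guarded) first-order formulas to LFD,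
relative to a variable correspondence `ρ`. -/
noncomputable def tau [Inhabited Var] [Fintype Var] [DecidableEq Var] [Fintype X] [DecidableEq X] :
    FO Rel ar X → (X → Var) → LFD Rel ar Var
  | .atom R vs, ρ => .atom R (fun i => ρ (vs i))
  | .eq _ _, _ => lbot
  | .tru, _ => ltop
  | .and φ ψ, ρ => .and (tau φ ρ) (tau ψ ρ)
  | .neg φ, ρ => .neg (tau φ ρ)
  | .exs Z φ, ρ => lbigOr
      ((((Finset.univ : Finset (X → Var)).filter (fun ρ' => ∀ x ∉ Z, ρ' x = ρ x)).toList).map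
        (fun ρ' => LFD.ex (Finset.image ρ (FO.free (FO.exs Z φ))) (tau φ ρ')))

/-! ### The first-order translation tr of LFD, and the transformation T -/

/-- Extended signature: the original relations plus a team relation `A` of arity `n`. -/
def exar (ar : Rel → ℕ) (n : ℕ) : Option Rel → ℕ
  | none => n
  | some R => ar R

/-- `A(v₁,…,vₙ)` (unprimed variables). -/
def atomA0 {n : ℕ} : FO (Option Rel) (exar ar n) (Fin n ⊕ Fin n) :=
  .atom none (fun i => Sum.inl i)

/-- `A(v₁′,…,vₙ′)` (primed variables). -/
def atomA0' {n : ℕ} : FO (Option Rel) (exar ar n) (Fin n ⊕ Fin n) :=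
  .atom none (fun i => Sum.inr i)

/-- The compositional first-order translation of LFD. -/
noncomputable def tr {n : ℕ} : LFD Rel ar (Fin n) → FO (Option Rel) (exar ar n) (Fin n ⊕ Fin n)
  | .atom R vs => .atom (some R) (fun i => Sum.inl (vs i))
  | .dep V u => FO.fall (Finset.image Sum.inr Finset.univ)
      (FO.imp atomA0'
        (FO.imp (FO.bigAnd (V.toList.map (fun v => FO.eq (Sum.inl v) (Sum.inr v))))
          (FO.eq (Sum.inl u) (Sum.inr u))))
  | .and φ ψ => .and (tr φ) (tr ψ)
  | .neg φ => .neg (tr φ)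
  | .ex V φ => .exs (Finset.image Sum.inl (Finset.univ \ V)) (.and atomA0 (tr φ))

/-- Extract a dependence model from a structure over the extended signature. -/
def Tmap {n : ℕ} (M : Str (Option Rel) (exar ar n) α) : Str Rel ar α × Set (Fin n → α) :=
  (⟨fun R t => M.interp (some R) t⟩, {s | M.interp none s})

/-- Inverse: expand a dependence model with the team relation. -/
def Tinv {n : ℕ} (N : Str Rel ar α × Set (Fin n → α)) : Str (Option Rel) (exar ar n) α :=
  ⟨fun R => match R with
    | none => fun t => t ∈ N.2
    | some R' => fun t => N.1.interp R' t⟩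

/-! ### Closure, types and type models -/

def sneg : LFD Rel ar Var → LFD Rel ar Var
  | .neg φ => φ
  | φ => .neg φ

def subL : LFD Rel ar Var → List (LFD Rel ar Var)
  | .atom R vs => [.atom R vs]
  | .dep V u => [.dep V u]
  | .and φ ψ => .and φ ψ :: (subL φ ++ subL ψ)
  | .neg φ => .neg φ :: subL φ
  | .ex V φ => .ex V φ :: subL φ

/-- The closure `Cl(ψ)` (as a list): subformulas, all dependence atoms, and single negations. -/
noncomputable def ClL [Fintype Var] [DecidableEq Var] (ψ : LFD Rel ar Var) : List (LFD Rel ar Var) :=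
  let S := subL ψ ++ (Finset.univ : Finset (Finset Var × Var)).toList.map (fun p => LFD.dep p.1 p.2)
  S ++ S.map sneg

def Cl [Fintype Var] [DecidableEq Var] (ψ : LFD Rel ar Var) : Set (LFD Rel ar Var) :=
  {χ | χ ∈ ClL ψ}

/-- Types for ψ. -/
structure IsType [Fintype Var] [DecidableEq Var] (ψ : LFD Rel ar Var)
    (Δ : Set (LFD Rel ar Var)) : Prop where
  subset : Δ ⊆ Cl ψ
  negc : ∀ χ, LFD.neg χ ∈ Cl ψ → (LFD.neg χ ∈ Δ ↔ χ ∉ Δ)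
  andc : ∀ χ ξ, LFD.and χ ξ ∈ Cl ψ → (LFD.and χ ξ ∈ Δ ↔ χ ∈ Δ ∧ ξ ∈ Δ)
  exc : ∀ (V : Finset Var) χ, LFD.ex V χ ∈ Cl ψ → χ ∈ Δ → LFD.ex V χ ∈ Δ
  proj : ∀ (V : Finset Var), ∀ u ∈ V, LFD.dep V u ∈ Δ
  tran : ∀ V U W : Finset Var, (∀ u ∈ U, LFD.dep V u ∈ Δ) → (∀ w ∈ W, LFD.dep U w ∈ Δ) →
    ∀ w ∈ W, LFD.dep V w ∈ Δ

/-- `Δ ∼_V Δ'`: the two types contain the same formulas with free variables in `V`. -/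
def SimV [DecidableEq Var] (V : Set Var) (Δ Δ' : Set (LFD Rel ar Var)) : Prop :=
  ∀ χ : LFD Rel ar Var, ↑χ.free ⊆ V → (χ ∈ Δ ↔ χ ∈ Δ')

/-- Dependence closure of `V` w.r.t. a type `Δ`. -/
def Dcl (Δ : Set (LFD Rel ar Var)) (V : Finset Var) : Set Var := {u | LFD.dep V u ∈ Δ}

/-- LFD type models. -/
def IsTypeModel [Fintype Var] [DecidableEq Var] (ψ : LFD Rel ar Var)
    (TM : Set (Set (LFD Rel ar Var))) : Prop :=
  (∀ Δ ∈ TM, IsType ψ Δ) ∧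
  (∀ Δ ∈ TM, ∀ Δ' ∈ TM, SimV ∅ Δ Δ') ∧
  (∀ Δ ∈ TM, ∀ (V : Finset Var) (χ : LFD Rel ar Var), LFD.ex V χ ∈ Δ →
    ∃ Δ' ∈ TM, SimV (Dcl Δ V) Δ Δ' ∧ χ ∈ Δ')

/-! ### The expanded signature Ŝ and the translation tr• -/

/-- The expanded signature `Ŝ`: the base relations, the team relation `A`,
and proxy relations `R^{V,U}` for dependence atoms. -/
inductive HatRel (Rel : Type) (n : ℕ) where
  | base : Rel → HatRel Rel n
  | teamA : HatRel Rel n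
  | drel : Finset (Fin n) → Finset (Fin n) → HatRel Rel n

def har (ar : Rel → ℕ) (n : ℕ) : HatRel Rel n → ℕ
  | .base R => ar R
  | .teamA => n
  | .drel V _ => V.card

/-- Canonical enumeration of a finite set of variables. -/
def enumV {n : ℕ} (V : Finset (Fin n)) : Fin V.card → Fin n :=
  fun i => ((V.orderIsoOfFin rfl) i : Fin n)

def atomAhat {n : ℕ} : FO (HatRel Rel n) (har ar n) (Fin n) := .atom .teamA (fun i => i)

/-- The modified first-order translation `tr•`, sending dependence atoms to proxy relations. -/
def trb {n : ℕ} : LFD Rel ar (Fin n) → FO (HatRel Rel n) (har ar n) (Fin n)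
  | .atom R vs => .atom (.base R) vs
  | .dep V u => .atom (.drel V {u}) (enumV V)
  | .and φ ψ => .and (trb φ) (trb ψ)
  | .neg φ => .neg (trb φ)
  | .ex V φ => .exs (Finset.univ \ V) (.and atomAhat (trb φ))

def nonDecomp : LFD Rel ar Var → Bool
  | .and _ _ => false
  | .neg _ => false
  | _ => true

def allGuard {n : ℕ} (φ : FO (HatRel Rel n) (har ar n) (Fin n)) :
    FO (HatRel Rel n) (har ar n) (Fin n) :=
  FO.fall Finset.univ (FO.imp atomAhat φ)

/-- `setup(ψ)`: A-guarded projection, transitivity and transfer axioms. -/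
noncomputable def setup {n : ℕ} (ψ : LFD Rel ar (Fin n)) : FO (HatRel Rel n) (har ar n) (Fin n) :=
  FO.bigAnd (
    ((Finset.univ : Finset (Finset (Fin n))).toList.map (fun V =>
      allGuard (FO.bigAnd (V.toList.map (fun u => FO.atom (.drel V {u}) (enumV V))))))
    ++ ((Finset.univ : Finset (Finset (Fin n) × Finset (Fin n) × Finset (Fin n))).toList.map
        (fun (p : Finset (Fin n) × Finset (Fin n) × Finset (Fin n)) => allGuard (FO.imp
          (FO.and (.atom (.drel p.1 p.2.1) (enumV p.1)) (.atom (.drel p.2.1 p.2.2) (enumV p.2.1)))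
          (.atom (.drel p.1 p.2.2) (enumV p.1)))))
    ++ (((Finset.univ : Finset (Finset (Fin n) × Finset (Fin n))).toList.map (fun (p : Finset (Fin n) × Finset (Fin n)) =>
        ((ClL ψ).filter (fun χ => nonDecomp χ)).map (fun ξ =>
          allGuard (FO.imp (FO.and (.atom (.drel p.1 p.2) (enumV p.1)) (trb (.ex p.1 ξ)))
            (trb (.ex (p.1 ∪ p.2) ξ)))))).flatten))

/-- `type^ψ(M,s)`. -/
def typeOf {n : ℕ} (ψ : LFD Rel ar (Fin n)) (M : Str (HatRel Rel n) (har ar n) α)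
    (s : Fin n → α) : Set (LFD Rel ar (Fin n)) :=
  {χ | χ ∈ Cl ψ ∧ FO.sat M s (trb χ)}

/-! ### Extended τ over the signature Ŝ -/

noncomputable def depSet [DecidableEq Var] [Inhabited Var] (V U : Finset Var) : LFD Rel ar Var :=
  (U.toList.map (fun u => LFD.dep V u)).foldr LFD.and ltop

/-- The translation τ extended to the expanded signature Ŝ. -/
noncomputable def tauHat {n : ℕ} [NeZero n] :
    FO (HatRel Rel n) (har ar n) (Fin n) → (Fin n → Fin n) → LFD Rel ar (Fin n)
  | .atom (.base R) vs, ρ => .atom R (fun i => ρ (vs i))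
  | .atom .teamA vs, ρ =>
      if (fun i : Fin n => ρ (vs i)) = (fun i : Fin n => i) then ltop else lbot
  | .atom (.drel U V) _, ρ => depSet (Finset.image ρ U) (Finset.image ρ V)
  | .eq _ _, _ => lbot
  | .tru, _ => ltop
  | .and φ ψ, ρ => .and (tauHat φ ρ) (tauHat ψ ρ)
  | .neg φ, ρ => .neg (tauHat φ ρ)
  | .exs Z φ, ρ => lbigOr
      ((((Finset.univ : Finset (Fin n → Fin n)).filter (fun ρ' => ∀ x ∉ Z, ρ' x = ρ x)).toList).map
        (fun ρ' => LFD.ex (Finset.image ρ (FO.free (FO.exs Z φ))) (tauHat φ ρ')))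

/-! Induction on `ψ`, with `tr ψ` alone equivalent to `ψ` at every assignment: in `tr (D_V u)` the
primed copy `v̄′` ranges over the team `A`, and the quantifier block of `tr (𝔼_V φ)` re-chooses
exactly the unprimed variables outside `V`, so both clauses unfold to their LFD semantics. The
conjunct `A(v̄)` is only needed at the top. -/

section FOSat

variable (M : Str Rel ar α)

@[simp] lemma FO.sat_imp (s : X → α) (φ ψ : FO Rel ar X) :
    FO.sat M s (φ.imp ψ) ↔ (FO.sat M s φ → FO.sat M s ψ) := by
  simp only [FO.imp, FO.sat, not_and, not_not]

@[simp] lemma FO.sat_fall (s : X → α) (Z : Finset X) (φ : FO Rel ar X) :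
    FO.sat M s (FO.fall Z φ) ↔ ∀ t : X → α, (∀ x ∉ Z, t x = s x) → FO.sat M t φ := by
  simp only [FO.fall, FO.sat, not_exists, not_and, not_not]

@[simp] lemma FO.sat_bigAnd (s : X → α) (l : List (FO Rel ar X)) :
    FO.sat M s (FO.bigAnd l) ↔ ∀ φ ∈ l, FO.sat M s φ := by
  induction l with
  | nil => simp [FO.bigAnd, FO.sat]
  | cons φ l ih => simp_all [FO.bigAnd, FO.sat]

end FOSat

section SumAssignments

variable {ι κ : Type} [DecidableEq ι] [DecidableEq κ]

lemma forall_eq_off_image_inr_iff [Fintype κ] (s : ι ⊕ κ → α) (P : (ι ⊕ κ → α) → Prop) :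
    (∀ t : ι ⊕ κ → α, (∀ x ∉ Finset.image Sum.inr Finset.univ, t x = s x) → P t) ↔
      ∀ t' : κ → α, P (Sum.elim (s ∘ Sum.inl) t') := by
  refine ⟨fun h t' => h _ ?_, fun h t ht => ?_⟩
  · rintro (i | k) hx
    · rfl
    · simp at hx
  · convert h (t ∘ Sum.inr)
    ext (i | k)
    · exact ht _ (by simp)
    · rfl

lemma exists_eq_off_image_inl_iff [Fintype ι] (s : ι ⊕ κ → α) (V : Finset ι)
    (P : (ι ⊕ κ → α) → Prop) :
    (∃ t : ι ⊕ κ → α, (∀ x ∉ Finset.image Sum.inl (Finset.univ \ V), t x = s x) ∧ P t) ↔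
      ∃ t' : ι → α, (∀ v ∈ V, s (Sum.inl v) = t' v) ∧ P (Sum.elim t' (s ∘ Sum.inr)) := by
  constructor
  · rintro ⟨t, ht, hP⟩
    refine ⟨t ∘ Sum.inl, fun v hv => (ht _ (by simpa using hv)).symm, ?_⟩
    convert hP
    ext (i | k)
    · rfl
    · exact (ht _ (by simp)).symm
  · rintro ⟨t', ht', hP⟩
    refine ⟨_, ?_, hP⟩
    rintro (i | k) hx
    · exact (ht' i (by simpa using hx)).symm
    · rfl

end SumAssignments

@[simp] lemma mem_Tmap_team {n : ℕ} (M : Str (Option Rel) (exar ar n) α) (t : Fin n → α) :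
    t ∈ (Tmap M).2 ↔ M.interp none t :=
  Iff.rfl

lemma sat_Tmap_iff_sat_tr {n : ℕ} (M : Str (Option Rel) (exar ar n) α) (ψ : LFD Rel ar (Fin n))
    (s : Fin n ⊕ Fin n → α) :
    LFD.sat (Tmap M).1 (Tmap M).2 (s ∘ Sum.inl) ψ ↔ FO.sat M s (tr ψ) := by
  induction ψ generalizing s with
  | atom R vs => exact Iff.rfl
  | and φ χ ihφ ihχ => exact and_congr (ihφ s) (ihχ s)
  | neg φ ih => exact not_congr (ih s)
  | dep V u =>
    simp only [tr, FO.sat_fall, forall_eq_off_image_inr_iff, FO.sat_imp, FO.sat_bigAnd,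
      List.mem_map, Finset.mem_toList, forall_exists_index, and_imp, forall_apply_eq_imp_iff₂]
    simp only [LFD.sat, FO.sat, atomA0', mem_Tmap_team]
    -- `Sum.elim _ t' (Sum.inr i)` sits under a binder of type `Fin (exar ar n none)`, out of `simp`'s reach
    rfl
  | ex V φ ih =>
    simp only [tr, FO.sat, exists_eq_off_image_inl_iff, ← ih]
    simp only [LFD.sat, FO.sat, atomA0, mem_Tmap_team]
    exact exists_congr fun _ => and_left_comm

/-- correctness of the first-order translation `tr` of LFD via `T`. -/
theorem tr_correct {Rel α : Type} {ar : Rel → ℕ} {n : ℕ}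
    (ψ : LFD Rel ar (Fin n)) (M : Str (Option Rel) (exar ar n) α)
    (s : (Fin n ⊕ Fin n) → α) (hs : FO.sat M s atomA0) :
    LFD.sat (Tmap M).1 (Tmap M).2 (fun v => s (Sum.inl v)) ψ ↔
      FO.sat M s (FO.and (tr ψ) atomA0) :=
  (sat_Tmap_iff_sat_tr M ψ s).trans (and_iff_left hs).symm

end LFDPaper
end

section
/- If Z is a dependence bisimulation between dependence models (M,A) and (M',A'), then for every (s,s') ∈ Z and every LFD formula φ, (M,A),s ⊨ φ if and only if (M',A'),s' ⊨ φ. -/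
namespace LFDPaper

variable {Rel Var α β X : Type} {ar : Rel → ℕ}

theorem depClosedAt.mem_of_sat_dep {M : Str Rel ar α} {A : Set (Var → α)} {s : Var → α}
    {W : Set Var} {V : Finset Var} {u : Var} (hW : depClosedAt A s W) (hVW : ↑V ⊆ W)
    (hdep : LFD.sat M A s (.dep V u)) : u ∈ W :=
  hW ▸ fun t ht hagree => hdep t ht fun v hv => hagree v (hVW hv)

namespace DepBisim

variable {M : Str Rel ar α} {A : Set (Var → α)} {M' : Str Rel ar β} {A' : Set (Var → β)}
  {Z : Set ((Var → α) × (Var → β))}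

theorem symm (hZ : DepBisim M A M' A' Z) : DepBisim M' A' M A (Prod.swap ⁻¹' Z) := by
  refine ⟨fun p hp => (hZ.1 _ hp).symm, fun p hp => ?_⟩
  obtain ⟨hatom, hforth, hback⟩ := hZ.2 _ hp
  exact ⟨fun R vs => (hatom R vs).symm, hback, hforth⟩

/-- One direction suffices: negation is handled by running the argument on the converse
bisimulation. -/
theorem sat_of_sat (hZ : DepBisim M A M' A' Z) {s : Var → α} {s' : Var → β}
    (hss' : (s, s') ∈ Z) {φ : LFD Rel ar Var} (hφ : LFD.sat M A s φ) :
    LFD.sat M' A' s' φ := by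
  induction φ generalizing α β s s' with
  | atom R vs => exact ((hZ.2 _ hss').1 R vs).1 hφ
  | dep V u =>
    intro t' ht' hagree
    obtain ⟨t, -, -, -, hclosed⟩ := (hZ.2 _ hss').2.2 t' ht'
    exact hclosed.mem_of_sat_dep hagree hφ
  | and φ ψ ihφ ihψ => exact ⟨ihφ hZ hss' hφ.1, ihψ hZ hss' hφ.2⟩
  | neg φ ih => exact fun hφ' => hφ (ih hZ.symm hss' hφ')
  | ex V φ ih =>
    obtain ⟨t, ht, hagree, htφ⟩ := hφ
    obtain ⟨t', ht', hsub, htt', -⟩ := (hZ.2 _ hss').2.1 t ht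
    exact ⟨t', ht', fun v hv => hsub (hagree v hv), ih hZ htt' htφ⟩

end DepBisim

/-- LFD formulas are invariant under dependence bisimulations. -/
theorem depBisim_invariance {Rel Var α β : Type} {ar : Rel → ℕ}
    (M : Str Rel ar α) (A : Set (Var → α)) (M' : Str Rel ar β) (A' : Set (Var → β))
    (Z : Set ((Var → α) × (Var → β))) (hZ : DepBisim M A M' A' Z)
    (s : Var → α) (s' : Var → β) (hss' : (s, s') ∈ Z) (φ : LFD Rel ar Var) :
    LFD.sat M A s φ ↔ LFD.sat M' A' s' φ :=
  ⟨hZ.sat_of_sat hss', hZ.symm.sat_of_sat hss'⟩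

end LFDPaper
end

section
/- Every dependence model (M,A) is dependence-bisimilar to a distinguished dependence model (M_d, A_d), obtained by replacing each value s(v) with the pair (v, s(v)): the relation {(s, s_d) | s ∈ A}, where s_d(v) = (v, s(v)), is a dependence bisimulation between (M,A) and (M_d, A_d). -/
namespace LFDPaper

variable {Rel Var α β X : Type} {ar : Rel → ℕ}

/-!
Replacing each value `s v` by `(v, s v)` does not change on which variables two assignments
agree, and `Md M A` is built so that an atom holds at `sd s` exactly when it holds at `s`.
Hence `s ↦ sd s` is a bijection from `A` onto `Ad A` that is invisible to dependence
bisimulations. The dependence-closure clauses hold because the agreement set of `s` with an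
admissible `t` is always dependence-closed at `s`: `t` itself witnesses it.
-/

theorem depClosedAt_eqSet {A : Set (Var → α)} (s : Var → α) {t : Var → α} (ht : t ∈ A) :
    depClosedAt A s (eqSet s t) :=
  Set.Subset.antisymm (fun _ hu => hu t ht fun _ hv => hv) fun _ hu _ _ hag => hag _ hu

theorem depBisim_graph {M : Str Rel ar α} {A : Set (Var → α)} {M' : Str Rel ar β}
    {A' : Set (Var → β)} {f : (Var → α) → (Var → β)} (hf : f '' A = A')
    (hEq : ∀ s ∈ A, ∀ t ∈ A, eqSet (f s) (f t) = eqSet s t)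
    (hAtom : ∀ s ∈ A, ∀ (R : Rel) (vs : Fin (ar R) → Var),
      M.interp R (fun i => s (vs i)) ↔ M'.interp R (fun i => f s (vs i))) :
    DepBisim M A M' A' {p | ∃ s ∈ A, p = (s, f s)} := by
  subst hf
  refine ⟨fun _ ⟨s, hs, hp⟩ => hp ▸ ⟨hs, s, hs, rfl⟩, ?_⟩
  rintro _ ⟨s, hs, rfl⟩
  refine ⟨hAtom s hs, fun t ht => ?_, ?_⟩
  · refine ⟨f t, ⟨t, ht, rfl⟩, (hEq s hs t ht).ge, ⟨t, ht, rfl⟩, ?_⟩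
    rw [← hEq s hs t ht]
    exact depClosedAt_eqSet _ ⟨t, ht, rfl⟩
  · rintro _ ⟨t, ht, rfl⟩
    refine ⟨t, ht, (hEq s hs t ht).le, ⟨t, ht, rfl⟩, ?_⟩
    rw [hEq s hs t ht]
    exact depClosedAt_eqSet _ ht

theorem eqSet_sd (s t : Var → α) : eqSet (sd s) (sd t) = eqSet s t := by
  ext v
  simp [eqSet, sd]

theorem distinguished_ad (A : Set (Var → α)) : Distinguished (Ad A) := by
  rintro _ ⟨s, -, rfl⟩ _ ⟨t, -, rfl⟩ v w h
  exact congrArg Prod.fst h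

theorem md_interp_sd_iff (M : Str Rel ar α) {A : Set (Var → α)} {s : Var → α} (hs : s ∈ A)
    (R : Rel) (vs : Fin (ar R) → Var) :
    (Md M A).interp R (fun i => sd s (vs i)) ↔ M.interp R (fun i => s (vs i)) := by
  refine ⟨fun ⟨s', _, us, hus, h⟩ => ?_, fun h => ⟨s, hs, vs, fun _ => rfl, h⟩⟩
  convert h using 2 with i
  exact congrArg Prod.snd (hus i)

/-- every dependence model is dependence-bisimilar to its distinguished
companion, via the relation `{(s, s_d) | s ∈ A}`. -/
theorem distinguished_companion {Rel Var α : Type} {ar : Rel → ℕ}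
    (M : Str Rel ar α) (A : Set (Var → α)) :
    Distinguished (Ad A) ∧
    DepBisim M A (Md M A) (Ad A) {p | ∃ s ∈ A, p = (s, sd s)} :=
  ⟨distinguished_ad A, depBisim_graph rfl (fun s _ t _ => eqSet_sd s t)
    fun _ hs R vs => (md_interp_sd_iff M hs R vs).symm⟩

end LFDPaper
end

section
/- For every distinguished dependence model (M,A), admissible assignment s ∈ A, equality-free guarded-fragment formula φ, and map ρ : free(φ) → V_LFD, we have (M,A),s ⊨ τ_ρ(φ) if and only if G(M,A), s∘ρ ⊨ φ. -/
namespace LFDPaper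

variable {Rel Var α β X : Type} {ar : Rel → ℕ}

/-!
Induction on the guarded formula; atoms, conjunctions and negations translate directly. For a
guarded quantifier `∃Z (G(vs) ∧ ψ)`, a witness `t'` in `G(M,A)` satisfies the guard, so `t' ∘ vs`
lies in the range of a single admissible assignment `t` and `t'` factors as `t ∘ ρ'` on the guarded
variables. Because the model is distinguished, `t (ρ' x) = s (ρ x)` forces `ρ' x = ρ x` outside
`Z`, so `ρ'` is one of the variable maps in the disjunction defining `τ_ρ`.
-/

theorem LFD.sat_lbigOr [Inhabited Var] (M : Str Rel ar α) (A : Set (Var → α)) (s : Var → α)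
    (l : List (LFD Rel ar Var)) :
    LFD.sat M A s (lbigOr l) ↔ ∃ χ ∈ l, LFD.sat M A s χ := by
  induction l with
  | nil =>
    simp only [lbigOr, List.foldr_nil, lbot, ltop, LFD.sat, List.not_mem_nil, false_and,
      exists_false, iff_false, not_not]
    exact fun t _ h => h default (Finset.mem_singleton_self default)
  | cons χ l ih =>
    simp only [lbigOr, List.foldr_cons, lor, LFD.sat, List.mem_cons] at ih ⊢
    rw [ih]
    by_cases h : LFD.sat M A s χ <;> simp [h]

theorem FO.sat_of_eqOn_free [DecidableEq X] (M : Str Rel ar α) (φ : FO Rel ar X) :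
    ∀ {s t : X → α}, (∀ x ∈ φ.free, s x = t x) → FO.sat M s φ → FO.sat M t φ := by
  induction φ with
  | atom R vs =>
    intro s t h hs
    have he : (fun i => t (vs i)) = fun i => s (vs i) :=
      funext fun i => (h (vs i) (by simp [FO.free])).symm
    simpa only [FO.sat, he] using hs
  | eq x y =>
    intro s t h hs
    simp only [FO.sat] at hs ⊢
    rwa [← h x (by simp [FO.free]), ← h y (by simp [FO.free])]
  | tru => exact fun _ _ => trivial
  | and φ ψ ihφ ihψ =>
    intro s t h hs
    exact ⟨ihφ (fun x hx => h x (by simp [FO.free, hx])) hs.1,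
      ihψ (fun x hx => h x (by simp [FO.free, hx])) hs.2⟩
  | neg φ ihφ =>
    intro s t h hs ht
    exact hs (ihφ (fun x hx => (h x (by simpa [FO.free] using hx)).symm) ht)
  | exs Z φ ihφ =>
    intro s t h ⟨u, hu, hsat⟩
    refine ⟨fun x => if x ∈ Z then u x else t x, fun x hx => by simp [hx], ihφ ?_ hsat⟩
    intro x hx
    by_cases hxZ : x ∈ Z
    · simp [hxZ]
    · simp only [hxZ, if_false]
      rw [hu x hxZ, h x (by simp [FO.free, hx, hxZ])]

section Correctness

variable [Inhabited Var] [Fintype Var] [DecidableEq Var] [Fintype X] [DecidableEq X]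
  (M : Str Rel ar α) (A : Set (Var → α))

theorem sat_tau_exs (s : Var → α) (Z : Finset X) (φ : FO Rel ar X) (ρ : X → Var) :
    LFD.sat M A s (tau (.exs Z φ) ρ) ↔ ∃ ρ' : X → Var, (∀ x ∉ Z, ρ' x = ρ x) ∧
      ∃ t ∈ A, (∀ x ∈ φ.free \ Z, s (ρ x) = t (ρ x)) ∧ LFD.sat M A t (tau φ ρ') := by
  simp only [tau, LFD.sat_lbigOr, List.mem_map, Finset.mem_toList, Finset.mem_filter,
    Finset.mem_univ, true_and, exists_exists_and_eq_and, LFD.sat, FO.free, Finset.mem_image,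
    forall_exists_index, and_imp, forall_apply_eq_imp_iff₂]

def TauCorrect (φ : FO Rel ar X) : Prop :=
  ∀ s ∈ A, ∀ ρ : X → Var, LFD.sat M A s (tau φ ρ) ↔ FO.sat (Gmap M A) (fun x => s (ρ x)) φ

theorem tauCorrect_atom (R : Rel) (vs : Fin (ar R) → X) : TauCorrect M A (.atom R vs) :=
  fun s hs ρ => ⟨fun h => ⟨h, s, hs, fun i => ⟨ρ (vs i), rfl⟩⟩, And.left⟩

variable {M A}

theorem TauCorrect.and {φ ψ : FO Rel ar X} (hφ : TauCorrect M A φ) (hψ : TauCorrect M A ψ) :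
    TauCorrect M A (.and φ ψ) :=
  fun s hs ρ => and_congr (hφ s hs ρ) (hψ s hs ρ)

theorem TauCorrect.neg {φ : FO Rel ar X} (hφ : TauCorrect M A φ) : TauCorrect M A (.neg φ) :=
  fun s hs ρ => not_congr (hφ s hs ρ)

theorem TauCorrect.exs_guarded (hdist : Distinguished A) {Z : Finset X} {G : Rel}
    {vs : Fin (ar G) → X} {ψ : FO Rel ar X} (hψ : TauCorrect M A ψ)
    (hcov : FO.free (.and (.atom G vs) ψ) ⊆ Finset.image vs Finset.univ) :
    TauCorrect M A (.exs Z (.and (.atom G vs) ψ)) := by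
  set body : FO Rel ar X := .and (.atom G vs) ψ
  have hbody : TauCorrect M A body := (tauCorrect_atom M A G vs).and hψ
  have hcov' : ∀ x ∈ body.free, x ∈ Set.range vs := fun x hx => by simpa using hcov hx
  intro s hs ρ
  rw [sat_tau_exs]
  constructor
  · rintro ⟨ρ', hρ', t, ht, hagree, hsat⟩
    refine FO.sat_of_eqOn_free _ _ (s := fun x => t (ρ' x)) ?_
      ⟨_, fun _ _ => rfl, (hbody t ht ρ').1 hsat⟩
    intro x hx
    obtain ⟨-, hxZ⟩ := Finset.mem_sdiff.1 hx
    rw [hρ' x hxZ, hagree x hx]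
  · rintro ⟨t', ht', hsat⟩
    obtain ⟨t, ht, hrange⟩ := hsat.1.2
    have hlift : ∀ x, ∃ v, (x ∈ Set.range vs → t' x = t v) ∧ (x ∉ Set.range vs → v = ρ x) := by
      intro x
      by_cases hx : x ∈ Set.range vs
      · obtain ⟨i, rfl⟩ := hx
        obtain ⟨v, hv⟩ := hrange i
        exact ⟨v, fun _ => hv, fun h => absurd ⟨i, rfl⟩ h⟩
      · exact ⟨ρ x, fun h => absurd h hx, fun _ => rfl⟩
    choose ρ' hρ'vs hρ' using hlift
    have hρ'Z : ∀ x ∉ Z, ρ' x = ρ x := by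
      intro x hxZ
      by_cases hx : x ∈ Set.range vs
      · exact hdist t ht s hs _ _ ((hρ'vs x hx).symm.trans (ht' x hxZ))
      · exact hρ' x hx
    refine ⟨ρ', hρ'Z, t, ht, fun x hx => ?_,
      (hbody t ht ρ').2 (FO.sat_of_eqOn_free _ _ (fun x hx => hρ'vs x (hcov' x hx)) hsat)⟩
    obtain ⟨hx, hxZ⟩ := Finset.mem_sdiff.1 hx
    calc s (ρ x) = t' x := (ht' x hxZ).symm
      _ = t (ρ' x) := hρ'vs x (hcov' x hx)
      _ = t (ρ x) := by rw [hρ'Z x hxZ]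

theorem tauCorrect_of_isGF (hdist : Distinguished A) {φ : FO Rel ar X} (hφ : IsGF φ) :
    TauCorrect M A φ := by
  induction hφ with
  | atom R vs => exact tauCorrect_atom M A R vs
  | and _ _ ihφ ihψ => exact ihφ.and ihψ
  | neg _ ih => exact ih.neg
  | exg _ hcov ih => exact ih.exs_guarded hdist hcov

end Correctness

/-- correctness of τ on distinguished dependence models. -/
theorem tau_correct {Rel α X : Type} {ar : Rel → ℕ} {n : ℕ} [NeZero n]
    [Fintype X] [DecidableEq X]
    (M : Str Rel ar α) (A : Set (Fin n → α)) (hdist : Distinguished A)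
    (s : Fin n → α) (hs : s ∈ A)
    (φ : FO Rel ar X) (hφ : IsGF φ) (ρ : X → Fin n) :
    LFD.sat M A s (tau φ ρ) ↔ FO.sat (Gmap M A) (fun x => s (ρ x)) φ :=
  tauCorrect_of_isGF hdist hφ s hs ρ

end LFDPaper
end
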